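/- arXiv:1907.13173 — 3 statements merged into one kernel-verified Lean document; each statement's English description precedes it below -/
import Mathlib

section
/- Let Φ : ℂ ∖ ((−∞, −1] ∪ [1, ∞)) → 𝔻 be the inverse of the holomorphic bijection S(z) = 2z/(z² + 1) from 𝔻 onto the doubly-slit plane. For r > 0 define H_r(z) = r·Φ(2z/r) for z ∈ ℍ (note 2z/r ∈ ℍ lies in the domain of Φ). Then H_r converges to the identity map locally uniformly on ℍ as r → ∞: for every compact set E ⊂ ℍ, sup_{z ∈ E} |H_r(z) − z| → 0 as r → ∞. -/
open Complex Metric Set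

/-- The map `S(z) = 2z/(z² + 1)`. -/
noncomputable def Smap (z : ℂ) : ℂ := 2 * z / (z ^ 2 + 1)

/-- The doubly-slit plane `ℂ ∖ ((−∞, −1] ∪ [1, ∞))`. -/
def doublySlit : Set ℂ :=
  Set.univ \ ((fun x : ℝ => (x : ℂ)) '' (Set.Iic (-1) ∪ Set.Ici 1))

/-!
If `w = Φ(2z/r)` then `S(w) = 2z/r` unwinds to `r w - z = z w²`, and `|S(w)| ≥ |w|` on the disk
gives `|w| ≤ 2|z|/r`. Hence `|H_r(z) - z| = |z| |w|² ≤ 4|z|³/r²`, uniformly small on bounded sets.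
-/

theorem tendstoUniformlyOn_of_eventually_dist_le {ι α β : Type*} [PseudoMetricSpace β]
    {F : ι → α → β} {f : α → β} {p : Filter ι} {s : Set α} {u : ι → ℝ}
    (hu : Filter.Tendsto u p (nhds 0)) (hFu : ∀ᶠ n in p, ∀ x ∈ s, dist (f x) (F n x) ≤ u n) :
    TendstoUniformlyOn F f p s := by
  rw [Metric.tendstoUniformlyOn_iff]
  intro ε hε
  filter_upwards [hFu, hu.eventually_lt_const hε] with n hn hun x hx
  exact (hn x hx).trans_lt hun

theorem mem_doublySlit_of_im_ne_zero {w : ℂ} (hw : w.im ≠ 0) : w ∈ doublySlit := by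
  refine ⟨trivial, ?_⟩
  rintro ⟨x, -, rfl⟩
  exact hw (ofReal_im x)

theorem sq_add_one_ne_zero_of_norm_lt_one {w : ℂ} (hw : ‖w‖ < 1) : w ^ 2 + 1 ≠ 0 := by
  intro h
  have : ‖w‖ ^ 2 = 1 := by
    rw [← norm_pow, eq_neg_of_add_eq_zero_left h, norm_neg, norm_one]
  nlinarith [norm_nonneg w]

theorem Smap_eq_iff_of_norm_lt_one {w ζ : ℂ} (hw : ‖w‖ < 1) :
    Smap w = ζ ↔ 2 * w = ζ * (w ^ 2 + 1) := by
  rw [Smap, div_eq_iff (sq_add_one_ne_zero_of_norm_lt_one hw)]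

theorem norm_le_norm_Smap_of_norm_lt_one {w : ℂ} (hw : ‖w‖ < 1) : ‖w‖ ≤ ‖Smap w‖ := by
  have hS := (Smap_eq_iff_of_norm_lt_one hw).1 rfl
  have hden : ‖w ^ 2 + 1‖ ≤ 2 := by
    calc ‖w ^ 2 + 1‖ ≤ ‖w‖ ^ 2 + 1 := (norm_add_le _ _).trans_eq (by rw [norm_pow, norm_one])
      _ ≤ 2 := by nlinarith [norm_nonneg w]
  have h2 : 2 * ‖w‖ = ‖Smap w‖ * ‖w ^ 2 + 1‖ := by
    simpa using congrArg norm hS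
  nlinarith [norm_nonneg (Smap w)]

theorem mul_sub_eq_mul_sq_of_Smap_eq {w z : ℂ} {r : ℝ} (hw : ‖w‖ < 1) (hr : r ≠ 0)
    (hS : Smap w = 2 * z / r) : r * w - z = z * w ^ 2 := by
  rw [Smap_eq_iff_of_norm_lt_one hw, div_mul_eq_mul_div, eq_div_iff (ofReal_ne_zero.2 hr)] at hS
  linear_combination hS / 2

theorem norm_mul_sub_le_of_Smap_eq {w z : ℂ} {r : ℝ} (hw : ‖w‖ < 1) (hr : 0 < r)
    (hS : Smap w = 2 * z / r) : ‖r * w - z‖ ≤ 4 * ‖z‖ ^ 3 / r ^ 2 := by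
  have hwz : ‖w‖ ≤ 2 * ‖z‖ / r := by
    calc ‖w‖ ≤ ‖Smap w‖ := norm_le_norm_Smap_of_norm_lt_one hw
      _ = 2 * ‖z‖ / r := by simp [hS, abs_of_pos hr]
  calc ‖r * w - z‖ = ‖z‖ * ‖w‖ ^ 2 := by
        rw [mul_sub_eq_mul_sq_of_Smap_eq hw hr.ne' hS, norm_mul, norm_pow]
    _ ≤ ‖z‖ * (2 * ‖z‖ / r) ^ 2 := by gcongr
    _ = 4 * ‖z‖ ^ 3 / r ^ 2 := by ring

theorem stmt10_general (Φ : ℂ → ℂ)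
    (hΦ2 : ∀ w ∈ doublySlit, Φ w ∈ ball (0:ℂ) 1 ∧ Smap (Φ w) = w) :
    ∀ E : Set ℂ, IsCompact E → E ⊆ {z : ℂ | 0 < z.im} →
      TendstoUniformlyOn (fun (r : ℝ) (z : ℂ) => (r : ℂ) * Φ (2 * z / (r : ℂ)))
        id Filter.atTop E := by
  intro E hE hEim
  obtain ⟨M, hM⟩ := hE.isBounded.subset_closedBall 0
  have hbound : Filter.Tendsto (fun r : ℝ => 4 * M ^ 3 / r ^ 2) Filter.atTop (nhds 0) :=
    tendsto_const_nhds.div_atTop (Filter.tendsto_pow_atTop two_ne_zero)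
  refine tendstoUniformlyOn_of_eventually_dist_le hbound ?_
  filter_upwards [Filter.eventually_gt_atTop 0] with r hr z hz
  have hzM : ‖z‖ ≤ M := by simpa using hM hz
  have him : (2 * z / (r : ℂ)).im ≠ 0 := by
    have hzim : 0 < z.im := hEim hz
    rw [div_ofReal_im, mul_im]
    simp only [re_ofNat, im_ofNat, zero_mul, add_zero]
    positivity
  obtain ⟨hΦball, hΦS⟩ := hΦ2 _ (mem_doublySlit_of_im_ne_zero him)
  calc dist (id z) (r * Φ (2 * z / r)) = ‖r * Φ (2 * z / r) - z‖ := by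
        rw [dist_comm, dist_eq_norm, id]
    _ ≤ 4 * ‖z‖ ^ 3 / r ^ 2 := norm_mul_sub_le_of_Smap_eq (mem_ball_zero_iff.1 hΦball) hr hΦS
    _ ≤ 4 * M ^ 3 / r ^ 2 := by gcongr

theorem stmt10 (Φ : ℂ → ℂ)
    (hΦ1 : ∀ z ∈ ball (0:ℂ) 1, Φ (Smap z) = z)
    (hΦ2 : ∀ w ∈ doublySlit, Φ w ∈ ball (0:ℂ) 1 ∧ Smap (Φ w) = w) :
    ∀ E : Set ℂ, IsCompact E → E ⊆ {z : ℂ | 0 < z.im} →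
      TendstoUniformlyOn (fun (r : ℝ) (z : ℂ) => (r : ℂ) * Φ (2 * z / (r : ℂ)))
        id Filter.atTop E :=
  stmt10_general Φ hΦ2
end

section
/- For p ∈ ℂ with |p| = 1 and t ∈ (−1, 1), the fold map F_{p,t} : 𝔻̄ → 𝔻̄, defined by F_{p,t}(z) = z for z ∈ C_{p,t} and F_{p,t}(z) = τ_{p,t}(z) for z ∈ C_{−p,−t}, is well defined (the two formulas agree on the overlap C_{p,t} ∩ C_{−p,−t}), takes values in the cap C_{p,t}, and is jointly continuous: (p, t, z) ↦ F_{p,t}(z) is continuous on {|p| = 1} × (−1, 1) × 𝔻̄. -/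
open Complex Metric Set

/-- The Möbius map `M_w(z) = (z + w)/(z·conj(w) + 1)`. -/
noncomputable def Mob (w z : ℂ) : ℂ := (z + w) / (z * (starRingEnd ℂ) w + 1)

/-- The reflection `R_p(z) = -p²·conj(z)`. -/
def Rp (p z : ℂ) : ℂ := -p ^ 2 * (starRingEnd ℂ) z

/-- The hyperbolic reflection `τ_{p,t} = M_{-pt} ∘ R_p ∘ M_{pt}`. -/
noncomputable def tau (p : ℂ) (t : ℝ) (z : ℂ) : ℂ :=
  Mob (-(p * (t : ℂ))) (Rp p (Mob (p * (t : ℂ)) z))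

/-- The hyperbolic cap `C_{p,t} = M_{-pt}(C_{p,0})`, where `C_{p,0}` is the
half-disk `{z ∈ 𝔻̄ : Re(z·conj(p)) ≥ 0}`. -/
noncomputable def cap (p : ℂ) (t : ℝ) : Set ℂ :=
  Mob (-(p * (t : ℂ))) '' {z ∈ closedBall (0:ℂ) 1 | 0 ≤ (z * (starRingEnd ℂ) p).re}

/-- The geodesic `γ_{p,t}` bounding the cap `C_{p,t}`. -/
noncomputable def geo (p : ℂ) (t : ℝ) : Set ℂ :=
  Mob (-(p * (t : ℂ))) '' {z ∈ closedBall (0:ℂ) 1 | (z * (starRingEnd ℂ) p).re = 0}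

open Classical in
/-- The fold map `F_{p,t}`: identity on the cap `C_{p,t}`, hyperbolic
reflection `τ_{p,t}` off the cap. -/
noncomputable def fold (p : ℂ) (t : ℝ) (z : ℂ) : ℂ :=
  if z ∈ cap p t then z else tau p t z

/-
The Möbius map `M_{pt}` sends the cap `C_{p,t}` to the half-disk `{Re(u·p̄) ≥ 0}` and
`C_{-p,-t}` to the opposite half-disk, so in the coordinate `u = M_{pt}(z)` the reflection
`τ_{p,t}` is the Euclidean reflection `R_p` in the diameter `Re(u·p̄) = 0`. Hence `τ_{p,t}` swaps
the two caps and fixes their common boundary, so the fold lands in `C_{p,t}`. Both branches of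
the fold are continuous in `(p, t, z)` and agree where the continuous function `Re(M_{pt}(z)·p̄)`
vanishes, which gives joint continuity.
-/

open ComplexConjugate

section Gluing

variable {X Y : Type*} [TopologicalSpace X] [TopologicalSpace Y]

lemma continuousWithinAt_inter_nonneg_of_eq {f a : X → Y} {g : X → ℝ} {s : Set X} {x : X}
    (hx : x ∈ s) (hg : ContinuousWithinAt g s x) (ha : ContinuousWithinAt a s x)
    (hfa : ∀ y ∈ s, 0 ≤ g y → f y = a y) :
    ContinuousWithinAt f (s ∩ {y | 0 ≤ g y}) x := by
  by_cases hgx : 0 ≤ g x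
  · exact (ha.mono inter_subset_left).congr (fun y hy => hfa y hy.1 hy.2) (hfa x hx hgx)
  · refine continuousWithinAt_of_notMem_closure fun hcl => hgx ?_
    exact ContinuousWithinAt.closure_le hcl continuousWithinAt_const (hg.mono inter_subset_left)
      fun y hy => hy.2

lemma ContinuousOn.of_eq_of_nonneg_of_eq_of_nonpos {f a b : X → Y} {g : X → ℝ} {s : Set X}
    (hg : ContinuousOn g s) (ha : ContinuousOn a s) (hb : ContinuousOn b s)
    (hfa : ∀ y ∈ s, 0 ≤ g y → f y = a y) (hfb : ∀ y ∈ s, g y ≤ 0 → f y = b y) :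
    ContinuousOn f s := fun x hx => by
  have hA := continuousWithinAt_inter_nonneg_of_eq hx (hg x hx) (ha x hx) hfa
  have hB := continuousWithinAt_inter_nonneg_of_eq hx (hg x hx).neg (hb x hx)
    fun y hy h => hfb y hy (neg_nonneg.1 h)
  refine (hA.union hB).mono fun y hy => ?_
  rcases le_total 0 (g y) with h | h
  · exact Or.inl ⟨hy, h⟩
  · exact Or.inr ⟨hy, neg_nonneg.2 h⟩

end Gluing

section Mob

variable {w z : ℂ}

lemma mob_denom_ne_zero (hz : ‖z‖ ≤ 1) (hw : ‖w‖ < 1) : z * conj w + 1 ≠ 0 := by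
  intro h
  have : ‖z * conj w‖ = 1 := by rw [eq_neg_of_add_eq_zero_left h, norm_neg, norm_one]
  rw [norm_mul, Complex.norm_conj] at this
  nlinarith [norm_nonneg z, norm_nonneg w]

lemma norm_mob_le_one (hz : ‖z‖ ≤ 1) (hw : ‖w‖ < 1) : ‖Mob w z‖ ≤ 1 := by
  have hd := mob_denom_ne_zero hz hw
  rw [Mob, norm_div, div_le_one (norm_pos_iff.2 hd), ← sq_le_sq₀ (norm_nonneg _) (norm_nonneg _),
    Complex.sq_norm, Complex.sq_norm]
  have hz2 : Complex.normSq z ≤ 1 := by rw [← Complex.sq_norm]; nlinarith [norm_nonneg z]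
  have hw2 : Complex.normSq w ≤ 1 := by rw [← Complex.sq_norm]; nlinarith [norm_nonneg w]
  -- `|z·w̄ + 1|² - |z + w|² = (1 - |z|²)(1 - |w|²)`
  simp only [Complex.normSq_apply, Complex.add_re, Complex.add_im, Complex.mul_re,
    Complex.mul_im, Complex.conj_re, Complex.conj_im, Complex.one_re, Complex.one_im] at *
  nlinarith [mul_nonneg (sub_nonneg.2 hz2) (sub_nonneg.2 hw2)]

lemma mob_mob_neg (hz : ‖z‖ ≤ 1) (hw : ‖w‖ < 1) : Mob w (Mob (-w) z) = z := by
  have hw' : ‖-w‖ < 1 := by rwa [norm_neg]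
  have hd := mob_denom_ne_zero hz hw'
  have hww : 1 - w * conj w ≠ 0 := by
    rw [Complex.mul_conj, ← Complex.ofReal_one, ← Complex.ofReal_sub, Complex.ofReal_ne_zero,
      ← Complex.sq_norm]
    nlinarith [norm_nonneg w]
  simp only [Mob, map_neg] at hd ⊢
  rw [div_add' _ _ _ hd, div_mul_eq_mul_div, div_add' _ _ _ hd, div_div_div_cancel_right₀ hd,
    div_eq_iff (by contrapose! hww; linear_combination hww)]
  ring

lemma mem_mob_neg_image_iff {P : ℂ → Prop} (hw : ‖w‖ < 1) :
    z ∈ Mob (-w) '' {u ∈ closedBall 0 1 | P u} ↔ ‖z‖ ≤ 1 ∧ P (Mob w z) := by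
  have hw' : ‖-w‖ < 1 := by rwa [norm_neg]
  constructor
  · rintro ⟨u, ⟨hu1, hu⟩, rfl⟩
    rw [mem_closedBall_zero_iff] at hu1
    exact ⟨norm_mob_le_one hu1 hw', by rwa [mob_mob_neg hu1 hw]⟩
  · rintro ⟨hz, hu⟩
    refine ⟨Mob w z, ⟨mem_closedBall_zero_iff.2 (norm_mob_le_one hz hw), hu⟩, ?_⟩
    simpa using mob_mob_neg hz hw'

lemma ContinuousAt.mob {X : Type*} [TopologicalSpace X] {f g : X → ℂ} {x : X}
    (hf : ContinuousAt f x) (hg : ContinuousAt g x) (h : g x * conj (f x) + 1 ≠ 0) :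
    ContinuousAt (fun y => Mob (f y) (g y)) x :=
  (hg.add hf).div ((hg.mul (Complex.continuous_conj.continuousAt.comp hf)).add continuousAt_const) h

end Mob

section Reflection

variable {p u : ℂ}

lemma mul_conj_eq_one (hp : ‖p‖ = 1) : p * conj p = 1 := by
  rw [Complex.mul_conj, Complex.normSq_eq_norm_sq, hp]; norm_num

lemma norm_Rp (hp : ‖p‖ = 1) : ‖Rp p u‖ = ‖u‖ := by
  simp [Rp, hp]

lemma re_Rp_mul_conj (hp : ‖p‖ = 1) : (Rp p u * conj p).re = -(u * conj p).re := by
  have h : Rp p u * conj p = -conj (u * conj p) := by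
    rw [Rp, map_mul, Complex.conj_conj]; linear_combination (-p * conj u) * mul_conj_eq_one hp
  rw [h, Complex.neg_re, Complex.conj_re]

lemma Rp_eq_self (hp : ‖p‖ = 1) (hu : (u * conj p).re = 0) : Rp p u = u := by
  have hv : conj u * p = -(u * conj p) := by
    rw [← Complex.conj_conj p, ← map_mul, Complex.conj_conj]
    exact Complex.ext (by rw [Complex.conj_re, Complex.neg_re, hu, neg_zero])
      (by rw [Complex.conj_im, Complex.neg_im])
  rw [Rp]
  linear_combination (-p) * hv + u * mul_conj_eq_one hp

end Reflection

noncomputable def geoSide (p : ℂ) (t : ℝ) (z : ℂ) : ℝ := (Mob (p * t) z * conj p).re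

section Cap

variable {p z : ℂ} {t : ℝ}

lemma norm_mul_ofReal_lt_one (hp : ‖p‖ = 1) (ht : |t| < 1) : ‖p * t‖ < 1 := by
  rwa [norm_mul, hp, one_mul, Complex.norm_real]

lemma mem_cap_iff (hp : ‖p‖ = 1) (ht : |t| < 1) :
    z ∈ cap p t ↔ ‖z‖ ≤ 1 ∧ 0 ≤ geoSide p t z :=
  mem_mob_neg_image_iff (norm_mul_ofReal_lt_one hp ht)

lemma mem_cap_neg_iff (hp : ‖p‖ = 1) (ht : |t| < 1) :
    z ∈ cap (-p) (-t) ↔ ‖z‖ ≤ 1 ∧ geoSide p t z ≤ 0 := by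
  have hw : -p * ((-t : ℝ) : ℂ) = p * t := by push_cast; ring
  rw [cap, hw, mem_mob_neg_image_iff (norm_mul_ofReal_lt_one hp ht),
    geoSide, map_neg, mul_neg, Complex.neg_re, neg_nonneg]

lemma tau_eq_self (hp : ‖p‖ = 1) (ht : |t| < 1) (hz : ‖z‖ ≤ 1) (h : geoSide p t z = 0) :
    tau p t z = z := by
  have hw := norm_mul_ofReal_lt_one hp ht
  rw [tau, Rp_eq_self hp h]
  simpa using mob_mob_neg hz (w := -(p * t)) (by rwa [norm_neg])

lemma tau_mem_cap (hp : ‖p‖ = 1) (ht : |t| < 1) (hz : ‖z‖ ≤ 1) (h : geoSide p t z ≤ 0) :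
    tau p t z ∈ cap p t := by
  refine ⟨Rp p (Mob (p * t) z), ⟨?_, ?_⟩, rfl⟩
  · simpa [norm_Rp hp] using norm_mob_le_one hz (norm_mul_ofReal_lt_one hp ht)
  · rw [re_Rp_mul_conj hp]
    exact neg_nonneg.2 h

lemma fold_eq_self (hp : ‖p‖ = 1) (ht : |t| < 1) (hz : ‖z‖ ≤ 1) (h : 0 ≤ geoSide p t z) :
    fold p t z = z :=
  if_pos ((mem_cap_iff hp ht).2 ⟨hz, h⟩)

lemma fold_eq_tau (hp : ‖p‖ = 1) (ht : |t| < 1) (hz : ‖z‖ ≤ 1) (h : geoSide p t z ≤ 0) :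
    fold p t z = tau p t z := by
  rcases h.lt_or_eq with h | h
  · exact if_neg fun hc => not_le.2 h ((mem_cap_iff hp ht).1 hc).2
  · rw [fold_eq_self hp ht hz h.ge, tau_eq_self hp ht hz h]

lemma fold_mem_cap (hp : ‖p‖ = 1) (ht : |t| < 1) (hz : ‖z‖ ≤ 1) : fold p t z ∈ cap p t := by
  rcases le_total 0 (geoSide p t z) with h | h
  · rw [fold_eq_self hp ht hz h]
    exact (mem_cap_iff hp ht).2 ⟨hz, h⟩
  · rw [fold_eq_tau hp ht hz h]
    exact tau_mem_cap hp ht hz h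

end Cap

section Continuity

variable {q : ℂ × ℝ × ℂ}

lemma continuousAt_mob_mul (hp : ‖q.1‖ = 1) (ht : |q.2.1| < 1) (hz : ‖q.2.2‖ ≤ 1) :
    ContinuousAt (fun q : ℂ × ℝ × ℂ => Mob (q.1 * q.2.1) q.2.2) q :=
  ContinuousAt.mob (by fun_prop) (by fun_prop)
    (mob_denom_ne_zero hz (norm_mul_ofReal_lt_one hp ht))

lemma continuousAt_geoSide (hp : ‖q.1‖ = 1) (ht : |q.2.1| < 1) (hz : ‖q.2.2‖ ≤ 1) :
    ContinuousAt (fun q : ℂ × ℝ × ℂ => geoSide q.1 q.2.1 q.2.2) q :=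
  Complex.continuous_re.continuousAt.comp
    ((continuousAt_mob_mul hp ht hz).mul (Complex.continuous_conj.comp continuous_fst).continuousAt)

lemma continuousAt_tau (hp : ‖q.1‖ = 1) (ht : |q.2.1| < 1) (hz : ‖q.2.2‖ ≤ 1) :
    ContinuousAt (fun q : ℂ × ℝ × ℂ => tau q.1 q.2.1 q.2.2) q := by
  have hRp : ContinuousAt (fun q : ℂ × ℝ × ℂ => Rp q.1 (Mob (q.1 * q.2.1) q.2.2)) q :=
    (continuous_fst.pow 2).neg.continuousAt.mul
      (Complex.continuous_conj.continuousAt.comp (continuousAt_mob_mul hp ht hz))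
  refine ContinuousAt.mob (by fun_prop) hRp (mob_denom_ne_zero ?_ ?_)
  · simpa [norm_Rp hp] using norm_mob_le_one hz (norm_mul_ofReal_lt_one hp ht)
  · simpa using norm_mul_ofReal_lt_one hp ht

end Continuity

theorem stmt11 :
    (∀ p : ℂ, ‖p‖ = 1 → ∀ t ∈ Set.Ioo (-1 : ℝ) 1,
      (∀ z ∈ cap p t ∩ cap (-p) (-t), tau p t z = z) ∧
      (∀ z ∈ closedBall (0:ℂ) 1, fold p t z ∈ cap p t)) ∧
    ContinuousOn (fun q : ℂ × ℝ × ℂ => fold q.1 q.2.1 q.2.2)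
      ((sphere (0:ℂ) 1) ×ˢ (Set.Ioo (-1 : ℝ) 1) ×ˢ (closedBall (0:ℂ) 1)) := by
  refine ⟨fun p hp t ht => ⟨?_, fun z hz => ?_⟩, ?_⟩
  · rintro z ⟨h₁, h₂⟩
    have ht := abs_lt.2 ht
    obtain ⟨hz, hpos⟩ := (mem_cap_iff hp ht).1 h₁
    exact tau_eq_self hp ht hz (le_antisymm ((mem_cap_neg_iff hp ht).1 h₂).2 hpos)
  · exact fold_mem_cap hp (abs_lt.2 ht) (mem_closedBall_zero_iff.1 hz)
  · have hD : ∀ q ∈ (sphere (0:ℂ) 1) ×ˢ (Set.Ioo (-1 : ℝ) 1) ×ˢ (closedBall (0:ℂ) 1),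
        ‖q.1‖ = 1 ∧ |q.2.1| < 1 ∧ ‖q.2.2‖ ≤ 1 := fun q ⟨hp, ht, hz⟩ =>
      ⟨mem_sphere_zero_iff_norm.1 hp, abs_lt.2 ht, mem_closedBall_zero_iff.1 hz⟩
    refine ContinuousOn.of_eq_of_nonneg_of_eq_of_nonpos (g := fun q => geoSide q.1 q.2.1 q.2.2)
      (a := fun q => q.2.2) (b := fun q => tau q.1 q.2.1 q.2.2) ?_ (by fun_prop) ?_ ?_ ?_ <;>
      intro q hq <;> obtain ⟨hp, ht, hz⟩ := hD q hq
    · exact (continuousAt_geoSide hp ht hz).continuousWithinAt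
    · exact (continuousAt_tau hp ht hz).continuousWithinAt
    · exact fold_eq_self hp ht hz
    · exact fold_eq_tau hp ht hz
end

section
/- (Hersch–Szegő normalization, continuous dependence.) Let Ω ⊂ ℂ be a bounded open set, let f : Ω → ℝ be integrable with f ≥ 0 and ∫_Ω f dA > 0, and let g : [0,1] → ℝ be continuous and strictly increasing with g(0) = 0. Define v(z) = g(|z|)·z/|z| for z ≠ 0, v(0) = 0. Let P be a metric space and T : P × Ω → 𝔻 be jointly continuous. For each q ∈ P let w(q) ∈ 𝔻 denote the unique point with ∫_Ω v(M_{w(q)}(T(q,z))) f(z) dA(z) = 0. Then the map q ↦ w(q) is continuous from P to 𝔻. -/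
/-!
The balancing integral `F(q, w) = ∫_Ω v(M_w(T(q,z))) f(z) dA(z)` is jointly continuous on
`P × closed disk`, by dominated convergence (`v` is continuous and hence bounded on the closed
disk). For `|w| = 1` the map `M_w` collapses the disk to the point `w`, so
`F(q, w) = g(1) · w · ∫_Ω f ≠ 0`. Hence every cluster point of `w(p)` as `p → q` is a zero of
`F(q, ·)` in the open disk, i.e. equals `w(q)`; compactness of the closed disk gives continuity.
-/

open Complex Metric Set MeasureTheory

open Classical in
/-- The function `v(z) = g(|z|)·z/|z|` for `z ≠ 0`, with `v(0) = 0`. -/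
noncomputable def vfun (g : ℝ → ℝ) (z : ℂ) : ℂ :=
  if z = 0 then 0 else (g ‖z‖ : ℂ) * z / (‖z‖ : ℂ)

open Filter Topology

lemma MapClusterPt.prodMk_of_tendsto {α X Y : Type*} [TopologicalSpace X] [TopologicalSpace Y]
    {l : Filter α} {f : α → X} {g : α → Y} {a : X} {b : Y}
    (hf : Tendsto f l (𝓝 a)) (hg : MapClusterPt b l g) :
    MapClusterPt (a, b) l (fun t => (f t, g t)) := by
  rw [((𝓝 a).basis_sets.prod_nhds (𝓝 b).basis_sets).mapClusterPt_iff_frequently]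
  rintro ⟨s, t⟩ ⟨hs, ht⟩
  exact ((hg.frequently ht).and_eventually (hf hs)).mono fun _ h => ⟨h.2, h.1⟩

section Mob

variable {w z : ℂ}

lemma Mob_denom_ne_zero (hw : ‖w‖ ≤ 1) (hz : ‖z‖ < 1) : z * (starRingEnd ℂ) w + 1 ≠ 0 := by
  intro h
  have hlt : ‖z * (starRingEnd ℂ) w‖ < 1 := by
    rw [norm_mul, Complex.norm_conj]
    nlinarith [norm_nonneg z, norm_nonneg w]
  rw [eq_neg_of_add_eq_zero_left h, norm_neg, norm_one] at hlt
  exact hlt.false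

lemma norm_Mob_le_one (hw : ‖w‖ ≤ 1) (hz : ‖z‖ < 1) : ‖Mob w z‖ ≤ 1 := by
  rw [Mob, norm_div]
  refine div_le_one_of_le₀ ?_ (norm_nonneg _)
  have hz2 : z.re ^ 2 + z.im ^ 2 < 1 := by
    nlinarith [Complex.sq_norm z, Complex.normSq_apply z, norm_nonneg z]
  have hw2 : w.re ^ 2 + w.im ^ 2 ≤ 1 := by
    nlinarith [Complex.sq_norm w, Complex.normSq_apply w, norm_nonneg w]
  -- `|1 + z w̄|² - |z + w|² = (1 - |z|²)(1 - |w|²)`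
  have key : Complex.normSq (z + w) ≤ Complex.normSq (z * (starRingEnd ℂ) w + 1) := by
    simp only [Complex.normSq_apply, Complex.add_re, Complex.add_im, Complex.mul_re,
      Complex.mul_im, Complex.conj_re, Complex.conj_im, Complex.one_re, Complex.one_im]
    nlinarith
  simpa [Complex.norm_def] using Real.sqrt_le_sqrt key

lemma Mob_of_norm_eq_one (hw : ‖w‖ = 1) (hz : ‖z‖ < 1) : Mob w z = w := by
  rw [Mob, div_eq_iff (Mob_denom_ne_zero hw.le hz)]
  have hww : w * (starRingEnd ℂ) w = 1 := by
    rw [Complex.mul_conj, Complex.normSq_eq_norm_sq, hw]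
    norm_num
  linear_combination (-z) * hww

lemma continuousAt_Mob (hw : ‖w‖ ≤ 1) (hz : ‖z‖ < 1) :
    ContinuousAt (fun x : ℂ × ℂ => Mob x.1 x.2) (w, z) :=
  ((continuous_snd.add continuous_fst).continuousAt).div
    (((continuous_snd.mul (continuous_star.comp continuous_fst)).add
      continuous_const).continuousAt)
    (Mob_denom_ne_zero hw hz)

end Mob

section vfun

variable {g : ℝ → ℝ}

lemma norm_vfun_le_abs (g : ℝ → ℝ) (z : ℂ) : ‖vfun g z‖ ≤ |g ‖z‖| := by
  unfold vfun
  split_ifs with h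
  · simp
  · have hz : ‖z‖ ≠ 0 := norm_ne_zero_iff.2 h
    rw [norm_div, norm_mul, Complex.norm_real, Complex.norm_real, norm_norm, Real.norm_eq_abs,
      mul_div_assoc, div_self hz, mul_one]

lemma vfun_of_norm_eq_one {w : ℂ} (hw : ‖w‖ = 1) : vfun g w = g 1 * w := by
  have hw0 : w ≠ 0 := norm_ne_zero_iff.1 (by rw [hw]; exact one_ne_zero)
  simp [vfun, hw0, hw]

lemma continuousOn_vfun (hgc : ContinuousOn g (Icc 0 1)) (hg0 : g 0 = 0) :
    ContinuousOn (vfun g) (closedBall 0 1) := by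
  intro z hz
  have hmaps : MapsTo (‖·‖) (closedBall (0 : ℂ) 1) (Icc 0 1) :=
    fun y hy => ⟨norm_nonneg y, mem_closedBall_zero_iff.1 hy⟩
  have hgnorm : ContinuousWithinAt (fun y : ℂ => g ‖y‖) (closedBall 0 1) z :=
    (hgc _ (hmaps hz)).comp continuous_norm.continuousWithinAt hmaps
  rcases eq_or_ne z 0 with rfl | hz0
  · -- at the origin, `|v(y)| ≤ |g(|y|)| → |g 0| = 0`
    have hlim : Tendsto (fun y : ℂ => g ‖y‖) (𝓝[closedBall 0 1] 0) (𝓝 0) := by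
      simpa [hg0] using hgnorm.tendsto
    rw [ContinuousWithinAt, show vfun g 0 = 0 by simp [vfun]]
    exact squeeze_zero_norm (norm_vfun_le_abs g) (by simpa using hlim.abs)
  · have hformula : ContinuousWithinAt (fun y : ℂ => (g ‖y‖ : ℂ) * y / (‖y‖ : ℂ))
        (closedBall 0 1) z :=
      ((continuous_ofReal.continuousAt.comp_continuousWithinAt hgnorm).mul
        continuousWithinAt_id).div
        (continuous_ofReal.comp continuous_norm).continuousWithinAt (by simpa using hz0)
    refine hformula.congr_of_eventuallyEq ?_ (by simp [vfun, hz0])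
    filter_upwards [eventually_nhdsWithin_of_eventually_nhds (eventually_ne_nhds hz0)]
      with y hy
    simp [vfun, hy]

end vfun

noncomputable def mobBalance (Ω : Set ℂ) (f : ℂ → ℝ) (g : ℝ → ℝ) (u : ℂ → ℂ) (w : ℂ) : ℂ :=
  ∫ z in Ω, vfun g (Mob w (u z)) * (f z : ℂ)

lemma mobBalance_of_norm_eq_one {Ω : Set ℂ} (hΩ : MeasurableSet Ω) (f : ℂ → ℝ) (g : ℝ → ℝ)
    {u : ℂ → ℂ} (hu : ∀ z ∈ Ω, u z ∈ ball (0 : ℂ) 1) {w : ℂ} (hw : ‖w‖ = 1) :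
    mobBalance Ω f g u w = g 1 * w * ∫ z in Ω, f z := by
  have hconst : ∀ z ∈ Ω, vfun g (Mob w (u z)) * (f z : ℂ) = g 1 * w * (f z : ℂ) := fun z hz => by
    rw [Mob_of_norm_eq_one hw (mem_ball_zero_iff.1 (hu z hz)), vfun_of_norm_eq_one hw]
  rw [mobBalance, setIntegral_congr_fun hΩ hconst, integral_const_mul, integral_complex_ofReal]

section continuity

variable {P : Type*} [TopologicalSpace P] {Ω : Set ℂ} {g : ℝ → ℝ} {T : P → ℂ → ℂ}

lemma continuousOn_vfun_Mob (hgc : ContinuousOn g (Icc 0 1)) (hg0 : g 0 = 0)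
    (hTc : ContinuousOn (fun q : P × ℂ => T q.1 q.2) (univ ×ˢ Ω))
    (hTmap : ∀ q : P, ∀ z ∈ Ω, T q z ∈ ball (0 : ℂ) 1) :
    ContinuousOn (fun y : (P × ℂ) × ℂ => vfun g (Mob y.1.2 (T y.1.1 y.2)))
      ((univ ×ˢ closedBall 0 1) ×ˢ Ω) := by
  have hT : ContinuousOn (fun y : (P × ℂ) × ℂ => T y.1.1 y.2) ((univ ×ˢ closedBall 0 1) ×ˢ Ω) :=
    hTc.comp (continuous_fst.fst.prodMk continuous_snd).continuousOn fun y hy =>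
      ⟨mem_univ _, hy.2⟩
  have hnorm : ∀ y ∈ (univ ×ˢ closedBall (0 : ℂ) 1) ×ˢ Ω,
      ‖y.1.2‖ ≤ 1 ∧ ‖T y.1.1 y.2‖ < 1 := fun y hy =>
    ⟨mem_closedBall_zero_iff.1 hy.1.2, mem_ball_zero_iff.1 (hTmap _ _ hy.2)⟩
  refine (continuousOn_vfun hgc hg0).comp (f := fun y : (P × ℂ) × ℂ => Mob y.1.2 (T y.1.1 y.2))
    (fun y hy => ?_) fun y hy =>
    mem_closedBall_zero_iff.2 (norm_Mob_le_one (hnorm y hy).1 (hnorm y hy).2)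
  exact (continuousAt_Mob (hnorm y hy).1 (hnorm y hy).2).comp_continuousWithinAt
    (f := fun y : (P × ℂ) × ℂ => (y.1.2, T y.1.1 y.2))
    (continuous_fst.snd.continuousWithinAt.prodMk (hT y hy))

lemma continuousOn_mobBalance [FirstCountableTopology P] (hΩ : MeasurableSet Ω) {f : ℂ → ℝ}
    (hfi : IntegrableOn f Ω) (hgc : ContinuousOn g (Icc 0 1)) (hg0 : g 0 = 0)
    (hTc : ContinuousOn (fun q : P × ℂ => T q.1 q.2) (univ ×ˢ Ω))
    (hTmap : ∀ q : P, ∀ z ∈ Ω, T q z ∈ ball (0 : ℂ) 1) :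
    ContinuousOn (fun x : P × ℂ => mobBalance Ω f g (T x.1) x.2) (univ ×ˢ closedBall 0 1) := by
  have H := continuousOn_vfun_Mob hgc hg0 hTc hTmap
  obtain ⟨C, hC⟩ := (isCompact_closedBall (0 : ℂ) 1).exists_bound_of_continuousOn
    (continuousOn_vfun hgc hg0)
  have hfm : AEStronglyMeasurable (fun z => (f z : ℂ)) (volume.restrict Ω) :=
    continuous_ofReal.comp_aestronglyMeasurable hfi.aestronglyMeasurable
  refine continuousOn_of_dominated (bound := fun z => C * ‖f z‖)
    (fun x hx => ?_) (fun x hx => ?_) (hfi.norm.const_mul C) ?_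
  · exact ((H.comp (continuous_const.prodMk continuous_id).continuousOn fun z hz => ⟨hx, hz⟩)
      |>.aestronglyMeasurable hΩ).mul hfm
  · refine (ae_restrict_iff' hΩ).2 (Eventually.of_forall fun z hz => ?_)
    rw [norm_mul, Complex.norm_real]
    refine mul_le_mul_of_nonneg_right (hC _ (mem_closedBall_zero_iff.2 ?_)) (norm_nonneg _)
    exact norm_Mob_le_one (mem_closedBall_zero_iff.1 hx.2) (mem_ball_zero_iff.1 (hTmap _ _ hz))
  · refine (ae_restrict_iff' hΩ).2 (Eventually.of_forall fun z hz => ?_)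
    exact (H.comp (continuous_id.prodMk continuous_const).continuousOn fun x hx => ⟨hx, hz⟩).mul
      continuousOn_const

end continuity

theorem stmt15_general {P : Type*} [MetricSpace P]
    (Ω : Set ℂ) (hΩo : IsOpen Ω)
    (f : ℂ → ℝ) (hfi : IntegrableOn f Ω)
    (hfpos : 0 < ∫ z in Ω, f z)
    (g : ℝ → ℝ) (hgc : ContinuousOn g (Set.Icc 0 1))
    (hgm : StrictMonoOn g (Set.Icc 0 1)) (hg0 : g 0 = 0)
    (T : P → ℂ → ℂ)
    (hTc : ContinuousOn (fun q : P × ℂ => T q.1 q.2) (Set.univ ×ˢ Ω))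
    (hTmap : ∀ q : P, ∀ z ∈ Ω, T q z ∈ ball (0:ℂ) 1)
    (w : P → ℂ)
    (hw : ∀ q : P, w q ∈ ball (0:ℂ) 1 ∧
      (∫ z in Ω, vfun g (Mob (w q) (T q z)) * (f z : ℂ)) = 0 ∧
      ∀ w' ∈ ball (0:ℂ) 1,
        (∫ z in Ω, vfun g (Mob w' (T q z)) * (f z : ℂ)) = 0 → w' = w q) :
    Continuous w := by
  have hg1 : 0 < g 1 := hg0 ▸ hgm (left_mem_Icc.2 zero_le_one) (right_mem_Icc.2 zero_le_one)
    zero_lt_one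
  have hzeros : IsClosed ((univ ×ˢ closedBall (0 : ℂ) 1) ∩
      (fun x : P × ℂ => mobBalance Ω f g (T x.1) x.2) ⁻¹' {0}) :=
    (continuousOn_mobBalance hΩo.measurableSet hfi hgc hg0 hTc hTmap).preimage_isClosed_of_isClosed
      (isClosed_univ.prod isClosed_closedBall) isClosed_singleton
  refine continuous_iff_continuousAt.2 fun q => (isCompact_closedBall 0 1)
    |>.tendsto_nhds_of_unique_mapClusterPt
      (Eventually.of_forall fun p => ball_subset_closedBall (hw p).1) fun x hx hcluster => ?_
  obtain ⟨-, hzero⟩ :=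
    hzeros.mem_of_mapClusterPt (MapClusterPt.prodMk_of_tendsto tendsto_id hcluster)
      (Eventually.of_forall fun p => ⟨⟨mem_univ p, ball_subset_closedBall (hw p).1⟩, (hw p).2.1⟩)
  have hinterior : ‖x‖ ≠ 1 := fun hx1 => by
    have hx0 : x ≠ 0 := norm_ne_zero_iff.1 (by rw [hx1]; exact one_ne_zero)
    rw [mem_preimage, mem_singleton_iff, mobBalance_of_norm_eq_one hΩo.measurableSet f g
      (hTmap q) hx1] at hzero
    exact mul_ne_zero (mul_ne_zero (ofReal_ne_zero.2 hg1.ne') hx0)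
      (ofReal_ne_zero.2 hfpos.ne') hzero
  exact (hw q).2.2 x (mem_ball_zero_iff.2 ((mem_closedBall_zero_iff.1 hx).lt_of_ne hinterior))
    hzero

theorem stmt15 {P : Type*} [MetricSpace P]
    (Ω : Set ℂ) (hΩo : IsOpen Ω) (hΩb : Bornology.IsBounded Ω)
    (f : ℂ → ℝ) (hfi : IntegrableOn f Ω)
    (hf0 : ∀ z ∈ Ω, 0 ≤ f z) (hfpos : 0 < ∫ z in Ω, f z)
    (g : ℝ → ℝ) (hgc : ContinuousOn g (Set.Icc 0 1))
    (hgm : StrictMonoOn g (Set.Icc 0 1)) (hg0 : g 0 = 0)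
    (T : P → ℂ → ℂ)
    (hTc : ContinuousOn (fun q : P × ℂ => T q.1 q.2) (Set.univ ×ˢ Ω))
    (hTmap : ∀ q : P, ∀ z ∈ Ω, T q z ∈ ball (0:ℂ) 1)
    (w : P → ℂ)
    (hw : ∀ q : P, w q ∈ ball (0:ℂ) 1 ∧
      (∫ z in Ω, vfun g (Mob (w q) (T q z)) * (f z : ℂ)) = 0 ∧
      ∀ w' ∈ ball (0:ℂ) 1,
        (∫ z in Ω, vfun g (Mob w' (T q z)) * (f z : ℂ)) = 0 → w' = w q) :
    Continuous w :=
  stmt15_general Ω hΩo f hfi hfpos g hgc hgm hg0 T hTc hTmap w hw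
end
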